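/- arXiv:1702.07154 — 3 statements merged into one kernel-verified Lean document; each statement's English description precedes it below -/
import Mathlib

section
/- If a sequence (a_n) of real numbers is measurable in the sense of Fast, then the sequence (|a_n|) is also measurable. -/
open Filter MeasureTheory
open scoped Classical ENNReal

/-- `dens A c`: the set `A ⊆ ℕ` has natural density `c`. -/
def dens (A : Set ℕ) (c : ℝ) : Prop :=
  Tendsto (fun n : ℕ => (((Finset.range n).filter (fun k => k ∈ A)).card : ℝ) / n)
    atTop (nhds c)

/-- Statistical convergence of a real sequence. -/
def StatTendsto (a : ℕ → ℝ) (l : ℝ) : Prop :=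
  ∀ ε > 0, dens {n | ε ≤ |a n - l|} 0

/-- A sequence is measurable in the sense of Fast if the densities of the sets
`{n : a n < x}` exist outside an at most countable set of `x`'s. -/
def FastMeasurable (a : ℕ → ℝ) : Prop :=
  ∃ S : Set ℝ, S.Countable ∧ ∀ x ∉ S, ∃ c, dens {n | a n < x} c

/-!
For `x > 0`, `{n | |a n| < x} = {n | a n < x} \ {n | a n ≤ -x}`, so it suffices that
`{n | a n ≤ t}` has a density for all but countably many `t`. The density `f x` of
`{n | a n < x}` is monotone on the co-countable set where it exists, so off a countable set of
jumps `f` has no gap at `t`: there are `y < t < z` with `f z - f y` arbitrarily small. Then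
`{n | a n ≤ t}` is squeezed between `{n | a n < y}` and `{n | a n < z}`, so its counting ratios
form a Cauchy sequence.
-/

open Set

noncomputable def countingRatio (A : Set ℕ) (n : ℕ) : ℝ :=
  (((Finset.range n).filter (fun k => k ∈ A)).card : ℝ) / n

lemma dens_iff_tendsto {A : Set ℕ} {c : ℝ} :
    dens A c ↔ Tendsto (countingRatio A) atTop (nhds c) :=
  Iff.rfl

lemma countingRatio_mono {A B : Set ℕ} (h : A ⊆ B) (n : ℕ) :
    countingRatio A n ≤ countingRatio B n :=
  div_le_div_of_nonneg_right
    (Nat.cast_le.2 (Finset.card_le_card (Finset.monotone_filter_right _ fun _ _ hk => h hk)))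
    n.cast_nonneg

lemma countingRatio_diff {A B : Set ℕ} (hBA : B ⊆ A) (n : ℕ) :
    countingRatio (A \ B) n = countingRatio A n - countingRatio B n := by
  have hsub : (Finset.range n).filter (· ∈ B) ⊆ (Finset.range n).filter (· ∈ A) :=
    Finset.monotone_filter_right _ fun _ _ hk => hBA hk
  rw [countingRatio, countingRatio, countingRatio, ← sub_div,
    ← Nat.cast_sub (Finset.card_le_card hsub), ← Finset.card_sdiff_of_subset hsub]
  congr 3
  ext k
  simp only [Finset.mem_filter, Finset.mem_sdiff, Set.mem_sdiff]
  tauto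

lemma dens_empty : dens ∅ 0 := by
  simp [dens]

lemma dens_le_of_subset {A B : Set ℕ} {c d : ℝ} (hAB : A ⊆ B) (hA : dens A c)
    (hB : dens B d) : c ≤ d :=
  le_of_tendsto_of_tendsto' hA hB (countingRatio_mono hAB)

lemma dens_diff {A B : Set ℕ} {c d : ℝ} (hBA : B ⊆ A) (hA : dens A c) (hB : dens B d) :
    dens (A \ B) (c - d) :=
  (hA.sub hB).congr fun n => (countingRatio_diff hBA n).symm

lemma exists_dens_of_sandwich {B : Set ℕ}
    (h : ∀ ε > 0, ∃ A C : Set ℕ, ∃ c d : ℝ,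
      A ⊆ B ∧ B ⊆ C ∧ dens A c ∧ dens C d ∧ d - c < ε) :
    ∃ L, dens B L := by
  suffices CauchySeq (countingRatio B) from cauchySeq_tendsto_of_complete this
  refine Metric.cauchySeq_iff'.2 fun ε hε => ?_
  obtain ⟨A, C, c, d, hAB, hBC, hA, hC, hcd⟩ := h (ε / 3) (by positivity)
  rw [dens_iff_tendsto] at hA hC
  have hlower := hA.eventually (Ioi_mem_nhds (show c - ε / 3 < c by linarith))
  have hupper := hC.eventually (Iio_mem_nhds (show d < d + ε / 3 by linarith))
  obtain ⟨N, hN⟩ := eventually_atTop.1 (hlower.and hupper)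
  have hbetween : ∀ n ≥ N, c - ε / 3 < countingRatio B n ∧ countingRatio B n < d + ε / 3 :=
    fun n hn => ⟨(hN n hn).1.trans_le (countingRatio_mono hAB n),
      (countingRatio_mono hBC n).trans_lt (hN n hn).2⟩
  refine ⟨N, fun n hn => ?_⟩
  obtain ⟨hn_lower, hn_upper⟩ := hbetween n hn
  obtain ⟨hN_lower, hN_upper⟩ := hbetween N le_rfl
  rw [Real.dist_eq, abs_lt]
  constructor <;> linarith

theorem MonotoneOn.countable_setOf_jump {f : ℝ → ℝ} {T : Set ℝ} (hf : MonotoneOn f T)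
    (hT : Dense T) :
    {t | ∃ ε > 0, ∀ y ∈ T, ∀ z ∈ T, y < t → t < z → ε ≤ f z - f y}.Countable := by
  -- A jump of `f` across `T` is a discontinuity of its monotone extension `F` to all of `ℝ`.
  set F : ℝ → ℝ := fun x => sInf (f '' (T ∩ Ioi x))
  have hbdd : ∀ x, BddBelow (f '' (T ∩ Ioi x)) := fun x => by
    obtain ⟨w, hwT, hw⟩ := hT.exists_between (sub_one_lt x)
    exact ⟨f w, forall_mem_image.2 fun z hz => hf hwT hz.1 (hw.2.trans hz.2).le⟩
  have hne : ∀ x, (f '' (T ∩ Ioi x)).Nonempty := fun x => by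
    obtain ⟨w, hwT, hw⟩ := hT.exists_between (lt_add_one x)
    exact ⟨f w, w, ⟨hwT, hw.1⟩, rfl⟩
  have hF : Monotone F := fun x y hxy =>
    csInf_le_csInf (hbdd x) (hne y) (image_mono fun z hz => ⟨hz.1, hxy.trans_lt hz.2⟩)
  have hF_le : ∀ x, ∀ z ∈ T, x < z → F x ≤ f z := fun x z hz hxz =>
    csInf_le (hbdd x) ⟨z, ⟨hz, hxz⟩, rfl⟩
  have le_hF : ∀ z ∈ T, f z ≤ F z := fun z hz =>
    le_csInf (hne z) (forall_mem_image.2 fun w hw => hf hz hw.1 hw.2.le)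
  refine hF.countable_not_continuousAt.mono fun t ⟨ε, hε, hjump⟩ => ?_
  intro hcont
  obtain ⟨δ, hδ, hFδ⟩ := Metric.continuousAt_iff.1 hcont (ε / 2) (half_pos hε)
  obtain ⟨y, hyT, hy⟩ := hT.exists_between (show t - δ / 2 < t by linarith)
  obtain ⟨z, hzT, hz⟩ := hT.exists_between (show t < t + δ by linarith)
  have hleft := hFδ (show dist (t - δ / 2) t < δ by
    rw [Real.dist_eq, abs_lt]; constructor <;> linarith)
  have hright := hFδ (show dist z t < δ by
    rw [Real.dist_eq, abs_lt]; constructor <;> linarith [hz.1, hz.2])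
  rw [Real.dist_eq, abs_lt] at hleft hright
  linarith [hjump y hyT z hzT hy.2 hz.1, hF_le _ y hyT hy.1, le_hF z hzT]

theorem FastMeasurable.exists_countable_dens_le {a : ℕ → ℝ} (h : FastMeasurable a) :
    ∃ S : Set ℝ, S.Countable ∧ ∀ t ∉ S, ∃ c, dens {n | a n ≤ t} c := by
  obtain ⟨S, hS, hdens⟩ := h
  choose! f hf using hdens
  have hmono : MonotoneOn f Sᶜ := fun x hx y hy hxy =>
    dens_le_of_subset (fun _ hn => lt_of_lt_of_le hn hxy) (hf x hx) (hf y hy)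
  refine ⟨_, hmono.countable_setOf_jump (hS.dense_compl ℝ), fun t ht => ?_⟩
  simp only [mem_ofPred_eq, not_exists, not_and, not_forall, not_le] at ht
  refine exists_dens_of_sandwich fun ε hε => ?_
  obtain ⟨y, hy, z, hz, hyt, htz, hfyz⟩ := ht ε hε
  exact ⟨_, _, _, _, fun _ hn => (hn.trans hyt).le, fun _ hn => lt_of_le_of_lt hn htz,
    hf y hy, hf z hz, hfyz⟩

theorem fastMeasurable_abs (a : ℕ → ℝ) (h : FastMeasurable a) :
    FastMeasurable (fun n => |a n|) := by
  obtain ⟨S', hS', hle⟩ := h.exists_countable_dens_le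
  obtain ⟨S, hS, hlt⟩ := h
  refine ⟨S ∪ Neg.neg ⁻¹' S', hS.union (hS'.preimage neg_injective), fun x hx => ?_⟩
  rw [mem_union, not_or, mem_preimage] at hx
  rcases le_or_gt x 0 with hx0 | hx0
  · have hempty : {n | |a n| < x} = ∅ :=
      eq_empty_of_forall_notMem fun n hn => (hx0.trans (abs_nonneg (a n))).not_gt hn
    exact ⟨0, hempty ▸ dens_empty⟩
  · obtain ⟨c, hc⟩ := hlt x hx.1
    obtain ⟨d, hd⟩ := hle (-x) hx.2
    have hsplit : {n | |a n| < x} = {n | a n < x} \ {n | a n ≤ -x} := by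
      ext n
      simp only [mem_ofPred_eq, Set.mem_sdiff, abs_lt, not_le, and_comm]
    have hsub : {n | a n ≤ -x} ⊆ {n | a n < x} := fun n (hn : a n ≤ -x) =>
      show a n < x by linarith
    exact ⟨c - d, hsplit ▸ dens_diff hsub hc hd⟩
end

section
/- There exists a sequence (a_n) of real numbers and a countably infinite set C ⊆ ℝ such that the natural density of {n : a_n < a} exists for all a ∈ ℝ \ C but fails to exist for every a ∈ C. (Specifically, one can arrange that the density fails to exist exactly at the points 1/2, 1/3, ..., 1/n, ....) -/
open Filter MeasureTheory
open scoped Classical ENNReal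

/-!
Write `n + 1 = 2 ^ j * (2 * t + 1)` and put `a n = 1 / (j + 2 + ε t)`, where
`ε t = 1 / (t + 1)` if `⌊log₂ t⌋` is even and `ε t = 0` otherwise. The level set `{j = J}` has
density `1 / 2 ^ (J + 1)`, and inside it `t` runs through `ℕ` at that rate. For
`1 / (J + 3) < x < 1 / (J + 2)` we have `a n < x` iff `j > J`, except for the finitely many `n`
with `j = J` and `ε t > 1 / x - (J + 2)`, so the density is `1 / 2 ^ (J + 1)`. At
`x = 1 / (J + 2)` the exceptional set becomes the whole fiber over `{t | ⌊log₂ t⌋ even}`, which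
has no density: its relative count on `[2 ^ k, 2 ^ (k + 1))` alternates between `1` and `0`.
-/

open Nat (count)
open Topology

section Density

variable {A B : Set ℕ} {a b c : ℝ}

lemma dens_iff_tendsto_count [DecidablePred (· ∈ A)] :
    dens A c ↔ Tendsto (fun N : ℕ => (count (· ∈ A) N : ℝ) / N) atTop (𝓝 c) := by
  simp only [dens, Nat.count_eq_card_filter_range]
  convert Iff.rfl

lemma dens_of_finite (hA : A.Finite) : dens A 0 := by
  rw [dens_iff_tendsto_count]
  refine squeeze_zero (fun N => by positivity) (fun N => ?_)
    (tendsto_const_div_atTop_nhds_zero_nat (hA.toFinset.card : ℝ))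
  gcongr
  exact_mod_cast Nat.count_le_card (p := (· ∈ A)) hA N

lemma dens_univ : dens Set.univ 1 := by
  rw [dens_iff_tendsto_count]
  refine tendsto_const_nhds.congr' ?_
  filter_upwards [eventually_ne_atTop 0] with N hN
  simp [hN]

lemma dens_setOf_dvd_succ {k : ℕ} (hk : 0 < k) : dens {n | k ∣ n + 1} (1 / k) := by
  have hfloor : ∀ N : ℕ, N / k = ⌊(1 / k : ℝ) * N⌋₊ := fun N => by
    rw [one_div_mul_eq_div, Nat.floor_div_eq_div]
  simp only [dens, Set.mem_ofPred_eq, Nat.card_multiples, hfloor]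
  exact (tendsto_nat_floor_mul_div_atTop (by positivity)).comp tendsto_natCast_atTop_atTop

lemma count_union_of_disjoint (hAB : Disjoint A B) (N : ℕ) :
    count (· ∈ A ∪ B) N = count (· ∈ A) N + count (· ∈ B) N := by
  simp only [Nat.count_eq_card_filter_range, Set.mem_union, Finset.filter_or]
  exact Finset.card_union_of_disjoint
    (Finset.disjoint_filter_filter' _ _ (by simpa [Pi.disjoint_iff] using Set.disjoint_left.mp hAB))

lemma dens.union (hAB : Disjoint A B) (hA : dens A a) (hB : dens B b) : dens (A ∪ B) (a + b) := by
  rw [dens_iff_tendsto_count] at *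
  simpa only [count_union_of_disjoint hAB, Nat.cast_add, add_div] using hA.add hB

lemma dens.of_union (hAB : Disjoint A B) (hA : dens A a) (hAB' : dens (A ∪ B) c) :
    dens B (c - a) := by
  rw [dens_iff_tendsto_count] at *
  simpa only [count_union_of_disjoint hAB, Nat.cast_add, add_div, add_sub_cancel_left]
    using hAB'.sub hA

lemma dens.tendsto_count_mul [DecidablePred (· ∈ A)] (hA : dens A c) {k : ℕ} (hk : 0 < k) :
    Tendsto (fun N : ℕ => (count (· ∈ A) (k * N) : ℝ) / N) atTop (𝓝 (k * c)) := by
  rw [dens_iff_tendsto_count] at hA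
  refine ((hA.comp (tendsto_id.const_mul_atTop' hk)).const_mul (k : ℝ)).congr' ?_
  filter_upwards [eventually_ne_atTop 0] with N hN
  simp only [Function.comp_apply, id, Nat.cast_mul]
  field_simp

lemma dens.tendsto_count_two_mul_sub [DecidablePred (· ∈ A)] (hA : dens A c) :
    Tendsto (fun N : ℕ => ((count (· ∈ A) (2 * N) : ℝ) - count (· ∈ A) N) / N) atTop (𝓝 c) := by
  simpa only [← sub_div, Nat.cast_ofNat, two_mul, add_sub_cancel_right] using
    (hA.tendsto_count_mul two_pos).sub (dens_iff_tendsto_count.1 hA)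

end Density

lemma count_even_log_two_mul_two_pow (j : ℕ) :
    count (· ∈ {t | Even (Nat.log 2 t)}) (2 * 2 ^ j) =
      count (· ∈ {t | Even (Nat.log 2 t)}) (2 ^ j) + if Even j then 2 ^ j else 0 := by
  have hlog : ∀ k < 2 ^ j, Nat.log 2 (2 ^ j + k) = j := fun k hk =>
    Nat.log_eq_of_pow_le_of_lt_pow (by omega) (by rw [pow_succ]; omega)
  rw [two_mul, Nat.count_add]
  congr 1
  split_ifs with hj
  · exact Nat.count_of_forall fun k hk => by simpa [hlog k hk] using hj
  · exact Nat.count_of_forall_not fun k hk => by simpa [hlog k hk] using hj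

lemma not_dens_setOf_even_log : ¬ ∃ c, dens {t | Even (Nat.log 2 t)} c := by
  rintro ⟨c, hc⟩
  have hparity : Tendsto (fun j : ℕ => if Even j then (1 : ℝ) else 0) atTop (𝓝 c) := by
    refine (hc.tendsto_count_two_mul_sub.comp
      (tendsto_pow_atTop_atTop_of_one_lt one_lt_two)).congr fun j => ?_
    simp only [Function.comp_apply, count_even_log_two_mul_two_pow]
    split_ifs <;> simp
  have hstep : Tendsto (fun j : ℕ => |(if Even (j + 1) then (1 : ℝ) else 0) -
      if Even j then 1 else 0|) atTop (𝓝 0) := by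
    simpa using ((hparity.comp (tendsto_add_atTop_nat 1)).sub hparity).abs
  refine one_ne_zero (tendsto_nhds_unique tendsto_const_nhds (hstep.congr fun j => ?_))
  by_cases hj : Even j <;> simp [hj, Nat.even_add_one]

/-- Writing `n + 1 = 2 ^ level n * (2 * index n + 1)` identifies `ℕ` with `ℕ × ℕ`. -/
def level (n : ℕ) : ℕ := (n + 1).factorization 2

def index (n : ℕ) : ℕ := ordCompl[2] (n + 1) / 2

lemma two_pow_level_mul (n : ℕ) : 2 ^ level n * (2 * index n + 1) = n + 1 := by
  have hodd : Odd (ordCompl[2] (n + 1)) :=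
    Nat.odd_iff.2 (Nat.two_dvd_ne_zero.1 (Nat.not_dvd_ordCompl Nat.prime_two n.succ_ne_zero))
  rw [index, Nat.two_mul_div_two_add_one_of_odd hodd]
  exact Nat.ordProj_mul_ordCompl_eq_self (n + 1) 2

lemma level_two_pow_mul (j t : ℕ) : level (2 ^ j * (2 * t + 1) - 1) = j := by
  rw [level, Nat.sub_add_cancel (Nat.one_le_iff_ne_zero.2 (by positivity)),
    Nat.factorization_mul (by positivity) (by omega), Nat.Prime.factorization_pow Nat.prime_two,
    Finsupp.add_apply, Nat.factorization_eq_zero_of_not_dvd (by omega)]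
  simp

lemma index_two_pow_mul (j t : ℕ) : index (2 ^ j * (2 * t + 1) - 1) = t := by
  have h := two_pow_level_mul (2 ^ j * (2 * t + 1) - 1)
  rw [level_two_pow_mul, Nat.sub_add_cancel (Nat.one_le_iff_ne_zero.2 (by positivity))] at h
  have := Nat.eq_of_mul_eq_mul_left (by positivity) h
  omega

lemma le_level_iff {s n : ℕ} : s ≤ level n ↔ 2 ^ s ∣ n + 1 :=
  (Nat.prime_two.pow_dvd_iff_le_factorization n.succ_ne_zero).symm

lemma dens_setOf_le_level (s : ℕ) : dens {n | s ≤ level n} (1 / 2 ^ s) := by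
  simpa only [le_level_iff, Nat.cast_pow, Nat.cast_ofNat] using
    dens_setOf_dvd_succ (Nat.two_pow_pos s)

def fiber (J : ℕ) (S : Set ℕ) : Set ℕ := {n | level n = J ∧ index n ∈ S}

lemma fiber_subset_image (J : ℕ) (S : Set ℕ) :
    fiber J S ⊆ (fun t => 2 ^ J * (2 * t + 1) - 1) '' S := by
  rintro n ⟨rfl, hn⟩
  exact ⟨index n, hn, by simp only [two_pow_level_mul, Nat.add_sub_cancel]⟩

lemma disjoint_setOf_lt_level_fiber (J : ℕ) (S : Set ℕ) :
    Disjoint {n | J < level n} (fiber J S) :=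
  Set.disjoint_left.2 fun _ hlt hn => hlt.ne' hn.1

lemma count_fiber (J T : ℕ) (S : Set ℕ) :
    count (· ∈ fiber J S) (2 ^ (J + 1) * T) = count (· ∈ S) T := by
  simp only [Nat.count_eq_card_filter_range]
  refine Finset.card_nbij' index (fun t => 2 ^ J * (2 * t + 1) - 1) ?_ ?_ ?_ ?_
  · intro n hn
    simp only [Finset.mem_coe, Finset.mem_filter, Finset.mem_range] at hn ⊢
    obtain ⟨hlt, rfl, hS⟩ := hn
    have := two_pow_level_mul n
    refine ⟨?_, hS⟩
    rw [pow_succ] at hlt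
    nlinarith [Nat.two_pow_pos (level n)]
  · intro t ht
    simp only [Finset.mem_coe, Finset.mem_filter, Finset.mem_range] at ht ⊢
    refine ⟨?_, level_two_pow_mul J t, by rw [index_two_pow_mul]; exact ht.2⟩
    calc 2 ^ J * (2 * t + 1) - 1 < 2 ^ J * (2 * t + 1) := Nat.sub_lt (by positivity) one_pos
      _ ≤ 2 ^ J * (2 * T) := Nat.mul_le_mul_left _ (by omega)
      _ = 2 ^ (J + 1) * T := by ring
  · intro n hn
    simp only [Finset.mem_coe, Finset.mem_filter] at hn
    simp only [← hn.2.1, two_pow_level_mul, Nat.add_sub_cancel]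
  · intro t _
    exact index_two_pow_mul J t

lemma dens.of_fiber {J : ℕ} {S : Set ℕ} {c : ℝ} (h : dens (fiber J S) c) :
    dens S (2 ^ (J + 1) * c) := by
  rw [dens_iff_tendsto_count]
  simpa only [count_fiber, Nat.cast_pow, Nat.cast_ofNat] using
    h.tendsto_count_mul (Nat.two_pow_pos (J + 1))

noncomputable def bump (t : ℕ) : ℝ := if Even (Nat.log 2 t) then 1 / (t + 1) else 0

lemma bump_nonneg (t : ℕ) : 0 ≤ bump t := by
  unfold bump; split_ifs <;> positivity

lemma bump_le_one_div (t : ℕ) : bump t ≤ 1 / (t + 1) := by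
  unfold bump; split_ifs <;> [rfl; positivity]

lemma bump_le_one (t : ℕ) : bump t ≤ 1 :=
  (bump_le_one_div t).trans (div_le_one_of_le₀ (by simp) (by positivity))

lemma bump_pos_iff {t : ℕ} : 0 < bump t ↔ Even (Nat.log 2 t) := by
  unfold bump; split_ifs with h <;> simp [h]; positivity

lemma finite_setOf_lt_bump {δ : ℝ} (hδ : 0 < δ) : {t | δ < bump t}.Finite := by
  refine (Set.finite_lt_nat ⌈1 / δ⌉₊).subset fun t ht => ?_
  have : δ < 1 / (t + 1) := ht.trans_le (bump_le_one_div t)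
  rw [lt_div_iff₀ (by positivity), ← lt_div_iff₀' hδ] at this
  exact_mod_cast (Nat.le_ceil _).trans_lt' (by linarith : (t : ℝ) < 1 / δ)

noncomputable def twoAdicSeq (n : ℕ) : ℝ := 1 / (level n + 2 + bump (index n))

lemma twoAdicSeq_pos (n : ℕ) : 0 < twoAdicSeq n := by
  have := bump_nonneg (index n); unfold twoAdicSeq; positivity

lemma twoAdicSeq_le_half (n : ℕ) : twoAdicSeq n ≤ 1 / 2 := by
  have := bump_nonneg (index n)
  exact one_div_le_one_div_of_le two_pos (by linarith [(level n).cast_nonneg (α := ℝ)])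

lemma lt_natCast_add_iff {m k : ℕ} {y e : ℝ} (hmy : m ≤ y) (hym : y < m + 1) (he₀ : 0 ≤ e)
    (he₁ : e ≤ 1) : y < k + e ↔ m < k ∨ k = m ∧ y - m < e := by
  rcases lt_trichotomy m k with h | rfl | h
  · have : (m : ℝ) + 1 ≤ k := by exact_mod_cast h
    exact iff_of_true (by linarith) (Or.inl h)
  · simp only [lt_irrefl, false_or, true_and]; constructor <;> intro <;> linarith
  · have : (k : ℝ) + 1 ≤ m := by exact_mod_cast h
    exact iff_of_false (by linarith) (by rintro (h' | ⟨rfl, -⟩) <;> omega)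

lemma setOf_twoAdicSeq_lt_eq {J : ℕ} {x : ℝ} (hx : 0 < x) (hJx : J + 2 ≤ 1 / x)
    (hxJ : 1 / x < J + 3) :
    {n | twoAdicSeq n < x} = {n | J < level n} ∪ fiber J {t | 1 / x - (J + 2) < bump t} := by
  ext n
  have key := lt_natCast_add_iff (k := level n + 2) (y := 1 / x) (by exact_mod_cast hJx)
    (by push_cast; linarith) (bump_nonneg (index n)) (bump_le_one (index n))
  simp only [Nat.add_lt_add_iff_right, Nat.add_right_cancel_iff, Nat.cast_add, Nat.cast_ofNat]
    at key
  simp only [Set.mem_ofPred_eq, Set.mem_union, fiber, twoAdicSeq]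
  rw [one_div_lt (by have := bump_nonneg (index n); positivity) hx, key]

lemma dens_setOf_twoAdicSeq_lt {J : ℕ} {x : ℝ} (hx : 0 < x) (hJx : J + 2 < 1 / x)
    (hxJ : 1 / x < J + 3) : dens {n | twoAdicSeq n < x} (1 / 2 ^ (J + 1)) := by
  rw [setOf_twoAdicSeq_lt_eq hx hJx.le hxJ, ← add_zero (1 / 2 ^ (J + 1) : ℝ)]
  refine (dens_setOf_le_level (J + 1)).union (disjoint_setOf_lt_level_fiber J _)
    (dens_of_finite ?_)
  exact ((finite_setOf_lt_bump (sub_pos.2 hJx)).image _).subset (fiber_subset_image J _)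

lemma not_dens_setOf_twoAdicSeq_lt_inv (J : ℕ) :
    ¬ ∃ c, dens {n | twoAdicSeq n < 1 / (J + 2)} c := by
  rintro ⟨c, hc⟩
  have hx : (0 : ℝ) < 1 / (J + 2) := by positivity
  have hB : {t | 1 / (1 / ((J : ℝ) + 2)) - (J + 2) < bump t} = {t | Even (Nat.log 2 t)} := by
    ext t; simp [bump_pos_iff]
  rw [setOf_twoAdicSeq_lt_eq (J := J) hx (by simp) (by norm_num), hB] at hc
  have hfiber := dens.of_union (disjoint_setOf_lt_level_fiber J _) (dens_setOf_le_level (J + 1)) hc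
  exact not_dens_setOf_even_log ⟨_, hfiber.of_fiber⟩

lemma exists_dens_setOf_twoAdicSeq_lt {x : ℝ} (hx : ∀ m : ℕ, 2 ≤ m → x ≠ 1 / m) :
    ∃ c, dens {n | twoAdicSeq n < x} c := by
  rcases le_or_gt x 0 with hx₀ | hx₀
  · refine ⟨0, dens_of_finite (Set.finite_empty.subset fun n hn => ?_)⟩
    exact (hn.trans_le hx₀).not_gt (twoAdicSeq_pos n)
  rcases lt_or_ge (1 / 2) x with hx₂ | hx₂
  · refine ⟨1, ?_⟩
    convert dens_univ
    exact Set.eq_univ_of_forall fun n => (twoAdicSeq_le_half n).trans_lt hx₂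
  have htwo : ((2 : ℕ) : ℝ) ≤ 1 / x := by
    rw [le_div_iff₀ hx₀]; push_cast; linarith
  obtain ⟨J, hJ⟩ : ∃ J : ℕ, ⌊1 / x⌋₊ = J + 2 := Nat.exists_eq_add_of_le' (Nat.le_floor htwo)
  have hfloor := Nat.floor_le (one_div_pos.2 hx₀).le
  have hceil := Nat.lt_floor_add_one (1 / x)
  rw [hJ] at hfloor hceil
  push_cast at hfloor hceil
  refine ⟨_, dens_setOf_twoAdicSeq_lt hx₀ (hfloor.lt_of_ne fun h => hx (J + 2) (by omega) ?_)
    (by linarith)⟩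
  rw [Nat.cast_add, Nat.cast_two, h, one_div_one_div]

theorem exists_seq_dens_fails_exactly_on_countable_set :
    ∃ (a : ℕ → ℝ) (C : Set ℝ),
      C = {x : ℝ | ∃ n : ℕ, 2 ≤ n ∧ x = 1 / n} ∧
      C.Countable ∧ C.Infinite ∧
      (∀ x ∉ C, ∃ c, dens {n | a n < x} c) ∧
      (∀ x ∈ C, ¬ ∃ c, dens {n | a n < x} c) := by
  refine ⟨twoAdicSeq, _, rfl, ?_, ?_, fun x hx => exists_dens_setOf_twoAdicSeq_lt ?_, ?_⟩
  · refine (Set.countable_range fun n : ℕ => 1 / (n : ℝ)).mono ?_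
    rintro x ⟨n, -, rfl⟩
    exact ⟨n, rfl⟩
  · refine Set.infinite_of_injective_forall_mem (f := fun J : ℕ => 1 / ((J : ℝ) + 2))
      (fun i j h => by simpa using h) fun J => by
        simp only [Set.mem_ofPred_eq]; exact ⟨J + 2, le_add_self, by push_cast; rfl⟩
  · exact fun m hm hxm => hx ⟨m, hm, hxm⟩
  · rintro x ⟨m, hm, rfl⟩
    obtain ⟨J, rfl⟩ := Nat.exists_eq_add_of_le' hm
    simpa using not_dens_setOf_twoAdicSeq_lt_inv J
end

section
/- (Improved Steinhaus theorem) Let (f_n), f be measurable functions on [0,1) with Lebesgue measure λ. Suppose (f_n) converges statistically in measure to f, and suppose there exists a sequence (ε_j) of positive reals tending to 0 such that for each j, the natural density of {n : |f_n(x) - f(x)| < ε_j} exists for λ-a.e. x. Then for every ε > 0, d({n : |f_n(x) - f(x)| ≥ ε}) = 0 for λ-a.e. x; i.e., (f_n) converges statistically almost everywhere to f. -/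
open Filter MeasureTheory
open scoped Classical ENNReal

/-!
Fix `δ = ε_j < ε` and let `E_k = {x | δ ≤ |f_k x - g x|}`. The measures `λ(E_k)` lie in `[0,1]`
and converge statistically to `0`, so their Cesàro means tend to `0`. These means are the
integrals of the partial densities `x ↦ #{k < n | x ∈ E_k} / n`, so by Fatou's lemma the
liminf of the partial densities vanishes almost everywhere. Wherever the density of
`{n | |f_n x - g x| < δ}` exists, the density of its complement `{k | x ∈ E_k}` exists too,
and must therefore be `0`; the set `{n | ε ≤ |f_n x - g x|}` is smaller.
-/
open Finset

noncomputable def partialDens (A : Set ℕ) (n : ℕ) : ℝ := (#{k ∈ range n | k ∈ A} : ℝ) / n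

theorem partialDens_nonneg (A : Set ℕ) (n : ℕ) : 0 ≤ partialDens A n := by
  unfold partialDens; positivity

theorem partialDens_compl (A : Set ℕ) {n : ℕ} (hn : n ≠ 0) :
    partialDens Aᶜ n = 1 - partialDens A n := by
  have hcard := card_filter_add_card_filter_not (s := range n) (· ∈ A)
  rw [card_range] at hcard
  simp only [partialDens, Set.mem_compl_iff]
  rw [eq_sub_iff_add_eq, ← add_div, ← Nat.cast_add, add_comm, hcard,
    div_self (Nat.cast_ne_zero.2 hn)]

theorem dens.compl {A : Set ℕ} {c : ℝ} (h : dens A c) : dens Aᶜ (1 - c) :=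
  (tendsto_const_nhds.sub h).congr'
    ((eventually_ne_atTop 0).mono fun _ hn => (partialDens_compl A hn).symm)

theorem dens_zero_of_subset {A B : Set ℕ} (hAB : A ⊆ B) (hB : dens B 0) : dens A 0 := by
  refine squeeze_zero (partialDens_nonneg A) (fun n => ?_) hB
  gcongr

theorem sum_abs_div_le_partialDens_add {a : ℕ → ℝ} {M η : ℝ} (hM : ∀ k, |a k| ≤ M)
    (hη : 0 ≤ η) (n : ℕ) :
    (∑ k ∈ range n, |a k|) / n ≤ M * partialDens {k | η ≤ |a k|} n + η := by
  rcases Nat.eq_zero_or_pos n with rfl | hn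
  · simpa [partialDens] using hη
  have hpt : ∀ k, |a k| ≤ M * (if η ≤ |a k| then 1 else 0) + η := by
    intro k
    split_ifs with hk
    · linarith [hM k]
    · linarith
  calc (∑ k ∈ range n, |a k|) / n
      ≤ (∑ k ∈ range n, (M * (if η ≤ |a k| then 1 else 0) + η)) / n := by
        gcongr with k; exact hpt k
    _ = M * partialDens {k | η ≤ |a k|} n + η := by
        rw [sum_add_distrib, ← mul_sum, sum_boole, sum_const, card_range, nsmul_eq_mul,
          add_div, mul_div_cancel_left₀ _ (by positivity : (n : ℝ) ≠ 0), mul_div_assoc]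
        rfl

theorem StatTendsto.tendsto_cesaro_abs {a : ℕ → ℝ} {M : ℝ} (hM : ∀ k, |a k| ≤ M)
    (h : StatTendsto a 0) :
    Tendsto (fun n => (∑ k ∈ range n, |a k|) / n) atTop (nhds 0) := by
  refine tendsto_order.2 ⟨fun b hb => Eventually.of_forall fun n => hb.trans_le (by positivity),
    fun b hb => ?_⟩
  have hlim : Tendsto (fun n => M * partialDens {k | b / 2 ≤ |a k|} n + b / 2) atTop
      (nhds (b / 2)) := by
    have := ((h (b / 2) (by positivity)).const_mul M).add_const (b / 2)
    simp only [sub_zero, mul_zero, zero_add] at this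
    exact this
  filter_upwards [hlim.eventually (gt_mem_nhds (by linarith : b / 2 < b))] with n hn
  exact (sum_abs_div_le_partialDens_add hM (by positivity) n).trans_lt hn

section Measure

variable {α : Type*}

theorem partialDens_setOf_mem_eq (E : ℕ → Set α) (n : ℕ) :
    (fun x => partialDens {k | x ∈ E k} n) =
      fun x => (∑ k ∈ range n, (E k).indicator (1 : α → ℝ) x) / n := by
  ext x
  simp only [partialDens, Set.mem_ofPred_eq, card_filter, Nat.cast_sum, Nat.cast_ite,
    Nat.cast_one, Nat.cast_zero, Set.indicator_apply, Pi.one_apply]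

variable [MeasurableSpace α] {μ : Measure α} {E : ℕ → Set α}

theorem measurable_partialDens (hE : ∀ k, MeasurableSet (E k)) (n : ℕ) :
    Measurable fun x => partialDens {k | x ∈ E k} n := by
  rw [partialDens_setOf_mem_eq]
  exact (Finset.measurable_sum _ fun k _ => measurable_const.indicator (hE k)).div_const _

variable [IsFiniteMeasure μ]

theorem integrable_partialDens (hE : ∀ k, MeasurableSet (E k)) (n : ℕ) :
    Integrable (fun x => partialDens {k | x ∈ E k} n) μ := by
  rw [partialDens_setOf_mem_eq]
  exact (integrable_finsetSum _ fun k _ => (integrable_const 1).indicator (hE k)).div_const _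

theorem integral_partialDens (hE : ∀ k, MeasurableSet (E k)) (n : ℕ) :
    ∫ x, partialDens {k | x ∈ E k} n ∂μ = (∑ k ∈ range n, μ.real (E k)) / n := by
  rw [partialDens_setOf_mem_eq, integral_div,
    integral_finsetSum _ fun k _ => (integrable_const 1).indicator (hE k)]
  simp only [integral_indicator_one (hE _)]

theorem ae_dens_eq_zero_of_tendsto_cesaro (hE : ∀ k, MeasurableSet (E k))
    (h : Tendsto (fun n => (∑ k ∈ range n, μ.real (E k)) / n) atTop (nhds 0)) :
    ∀ᵐ x ∂μ, ∀ c, dens {k | x ∈ E k} c → c = 0 := by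
  set D : ℕ → α → ℝ≥0∞ := fun n x => ENNReal.ofReal (partialDens {k | x ∈ E k} n)
  have hD : ∀ n, Measurable (D n) := fun n => (measurable_partialDens hE n).ennreal_ofReal
  have hlintegral : Tendsto (fun n => ∫⁻ x, D n x ∂μ) atTop (nhds 0) := by
    simp_rw [D, ← ofReal_integral_eq_lintegral_ofReal (integrable_partialDens hE _)
      (Eventually.of_forall fun _ => partialDens_nonneg _ _), integral_partialDens hE]
    simpa using ENNReal.tendsto_ofReal h
  have hliminf : ∀ᵐ x ∂μ, liminf (fun n => D n x) atTop = 0 := by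
    refine (lintegral_eq_zero_iff (Measurable.liminf hD)).1 (nonpos_iff_eq_zero.1 ?_)
    exact (lintegral_liminf_le hD).trans_eq hlintegral.liminf_eq
  filter_upwards [hliminf] with x hx c hc
  have hc0 : ENNReal.ofReal c = 0 := (ENNReal.tendsto_ofReal hc).liminf_eq ▸ hx
  exact le_antisymm (ENNReal.ofReal_eq_zero.1 hc0)
    (ge_of_tendsto' hc fun n => partialDens_nonneg _ n)

end Measure

theorem improved_steinhaus
    (f : ℕ → ℝ → ℝ) (g : ℝ → ℝ)
    (hf : ∀ n, Measurable (f n)) (hg : Measurable g)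
    (μ : Measure ℝ) (hμ : μ = volume.restrict (Set.Ico (0:ℝ) 1))
    (hstm : ∀ ε > 0, StatTendsto (fun n => (μ {x | ε ≤ |f n x - g x|}).toReal) 0)
    (hdens : ∃ ε : ℕ → ℝ, (∀ j, 0 < ε j) ∧ Tendsto ε atTop (nhds 0) ∧
      ∀ j, ∀ᵐ x ∂μ, ∃ c, dens {n | |f n x - g x| < ε j} c) :
    ∀ ε > 0, ∀ᵐ x ∂μ, dens {n | ε ≤ |f n x - g x|} 0 := by
  intro ε hε
  obtain ⟨δ, hδpos, hδlim, hδdens⟩ := hdens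
  obtain ⟨j, hj⟩ := (hδlim.eventually (eventually_lt_nhds hε)).exists
  have : IsFiniteMeasure μ := hμ ▸ isFiniteMeasure_restrict.2 measure_Ico_lt_top.ne
  set E : ℕ → Set ℝ := fun k => {x | δ j ≤ |f k x - g x|}
  have hE : ∀ k, MeasurableSet (E k) := fun k =>
    measurableSet_le measurable_const ((hf k).sub hg).abs
  have hstat : StatTendsto (fun k => μ.real (E k)) 0 := hstm _ (hδpos j)
  have hcesaro : Tendsto (fun n => (∑ k ∈ range n, μ.real (E k)) / n) atTop (nhds 0) := by
    simpa only [abs_of_nonneg measureReal_nonneg] using hstat.tendsto_cesaro_abs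
      fun k => (abs_of_nonneg measureReal_nonneg).trans_le (measureReal_mono (Set.subset_univ _))
  filter_upwards [hδdens j, ae_dens_eq_zero_of_tendsto_cesaro hE hcesaro] with x ⟨c, hc⟩ hzero
  have hcompl : {n | |f n x - g x| < δ j}ᶜ = {k | x ∈ E k} := by ext; simp [E]
  have hdensE : dens {k | x ∈ E k} (1 - c) := hcompl ▸ hc.compl
  exact dens_zero_of_subset (fun n hn => hj.le.trans hn) (hzero _ hdensE ▸ hdensE)
end
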